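/- arXiv:1610.06058 — 3 statements merged into one kernel-verified Lean document; each statement's English description precedes it below -/
import Mathlib

section
/- If G is a finite simple König-Egerváry graph, i.e. its matching number equals its covering number, then the number of maximal independent sets of G is at most 2^ν(G), where ν(G) is the matching number of G. -/
variable {V : Type*}

/-- `S` is an independent set of `G`: no two vertices of `S` are adjacent. -/
def IsIndepSet (G : SimpleGraph V) (S : Set V) : Prop :=
  ∀ ⦃u v : V⦄, u ∈ S → v ∈ S → ¬ G.Adj u v

/-- `S` is a maximal independent set of `G`. -/
def IsMaxIndepSet (G : SimpleGraph V) (S : Set V) : Prop :=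
  IsIndepSet G S ∧ ∀ T : Set V, IsIndepSet G T → S ⊆ T → S = T

/-- `m(G)`: the number of maximal independent sets of `G`. -/
noncomputable def numMaxIndep (G : SimpleGraph V) : ℕ :=
  {S : Set V | IsMaxIndepSet G S}.ncard

/-- `C` is a vertex cover of `G`: every edge has at least one endpoint in `C`. -/
def IsVertexCover (G : SimpleGraph V) (C : Set V) : Prop :=
  ∀ ⦃u v : V⦄, G.Adj u v → u ∈ C ∨ v ∈ C

/-- `β(G)`: the minimum size of a vertex cover of `G`. -/
noncomputable def coverNumber (G : SimpleGraph V) : ℕ :=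
  sInf {n : ℕ | ∃ C : Set V, IsVertexCover G C ∧ C.ncard = n}

/-- `M` is a matching of `G`: a set of edges of `G`, pairwise sharing no vertex. -/
def IsMatching (G : SimpleGraph V) (M : Set (Sym2 V)) : Prop :=
  M ⊆ G.edgeSet ∧ ∀ e ∈ M, ∀ f ∈ M, e ≠ f → ∀ v : V, v ∈ e → v ∉ f

/-- `M` is an induced matching of `G`: a matching such that no two distinct
edges of `M` are joined by an edge of `G`. -/
def IsInducedMatching (G : SimpleGraph V) (M : Set (Sym2 V)) : Prop :=
  IsMatching G M ∧ ∀ e ∈ M, ∀ f ∈ M, e ≠ f → ∀ u v : V, u ∈ e → v ∈ f → ¬ G.Adj u v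

/-- `ν(G)`: the maximum size of a matching of `G`. -/
noncomputable def matchingNumber (G : SimpleGraph V) : ℕ :=
  sSup {n : ℕ | ∃ M : Set (Sym2 V), IsMatching G M ∧ M.ncard = n}

/-- `ν₀(G)`: the maximum size of an induced matching of `G`. -/
noncomputable def inducedMatchingNumber (G : SimpleGraph V) : ℕ :=
  sSup {n : ℕ | ∃ M : Set (Sym2 V), IsInducedMatching G M ∧ M.ncard = n}

/-- `G` is bipartite: the vertices split into two sides with every edge crossing. -/
def IsBipartite (G : SimpleGraph V) : Prop :=
  ∃ A : Set V, ∀ ⦃u v : V⦄, G.Adj u v → (u ∈ A ↔ v ∉ A)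

/-! A maximal independent set is determined by its trace on any vertex cover `C`: a vertex
outside `C` belongs to it exactly when none of its neighbours, all of which lie in `C`, does.
Hence `m(G) ≤ 2 ^ |C|`, and a minimum cover of a König-Egerváry graph has `ν(G)` vertices. -/

namespace IsMaxIndepSet

variable {G : SimpleGraph V} {C S S' : Set V}

lemma mem_of_forall_not_adj (hS : IsMaxIndepSet G S) {v : V}
    (hv : ∀ w ∈ S, ¬ G.Adj v w) : v ∈ S := by
  have hindep : IsIndepSet G (insert v S) := by
    rintro a b (rfl | ha) (rfl | hb) hab
    · exact G.irrefl hab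
    · exact hv b hb hab
    · exact hv a ha hab.symm
    · exact hS.1 ha hb hab
  rw [hS.2 _ hindep (Set.subset_insert v S)]
  exact Set.mem_insert v S

lemma subset_of_inter_eq (hC : IsVertexCover G C) (hS : IsMaxIndepSet G S)
    (hS' : IsMaxIndepSet G S') (h : S ∩ C = S' ∩ C) : S ⊆ S' := by
  intro v hv
  by_cases hvC : v ∈ C
  · exact (h ▸ ⟨hv, hvC⟩ : v ∈ S' ∩ C).1
  · refine hS'.mem_of_forall_not_adj fun w hw hvw => ?_
    have hwC : w ∈ C := (hC hvw).resolve_left hvC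
    exact hS.1 hv (h ▸ ⟨hw, hwC⟩ : w ∈ S ∩ C).1 hvw

end IsMaxIndepSet

lemma injOn_inter_isVertexCover {G : SimpleGraph V} {C : Set V} (hC : IsVertexCover G C) :
    Set.InjOn (· ∩ C) {S | IsMaxIndepSet G S} := fun _ hS _ hS' h =>
  (hS.subset_of_inter_eq hC hS' h).antisymm (hS'.subset_of_inter_eq hC hS h.symm)

lemma numMaxIndep_le_two_pow_ncard [Finite V] {G : SimpleGraph V} {C : Set V}
    (hC : IsVertexCover G C) : numMaxIndep G ≤ 2 ^ C.ncard := by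
  rw [← Set.ncard_powerset C]
  exact Set.ncard_le_ncard_of_injOn (· ∩ C) (fun _ _ => Set.inter_subset_right)
    (injOn_inter_isVertexCover hC)

lemma exists_isVertexCover_ncard_eq_coverNumber (G : SimpleGraph V) :
    ∃ C, IsVertexCover G C ∧ C.ncard = coverNumber G :=
  Nat.sInf_mem (s := {n | ∃ C, IsVertexCover G C ∧ C.ncard = n})
    ⟨_, Set.univ, fun u _ _ => Or.inl (Set.mem_univ u), rfl⟩

lemma numMaxIndep_le_two_pow_coverNumber [Finite V] (G : SimpleGraph V) :
    numMaxIndep G ≤ 2 ^ coverNumber G := by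
  obtain ⟨C, hC, hCcard⟩ := exists_isVertexCover_ncard_eq_coverNumber G
  exact hCcard ▸ numMaxIndep_le_two_pow_ncard hC

/-- If `G` is a König-Egerváry graph then `m(G) ≤ 2 ^ ν(G)`. -/
theorem numMaxIndep_le_two_pow_matchingNumber_of_koenig [Fintype V] (G : SimpleGraph V)
    (hKE : coverNumber G = matchingNumber G) :
    numMaxIndep G ≤ 2 ^ matchingNumber G :=
  hKE ▸ numMaxIndep_le_two_pow_coverNumber G
end

section
/- For every finite simple graph G, the number of maximal independent sets of G is at most 3^ν(G), where ν(G) is the matching number of G. -/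
variable {V : Type*}

/-! Let `M` be a maximum matching. The unmatched vertices are pairwise non-adjacent, since an
edge between two of them would extend `M`. Hence a maximal independent set `S` is determined by
its trace on the matched vertices: an unmatched vertex lies in `S` iff it has no neighbour in that
trace. On each edge of `M` the independent set `S` contains at most one endpoint, so there are at
most `3 ^ |M|` possible traces. -/

section

variable {G : SimpleGraph V}

theorem IsMaxIndepSet.exists_adj_of_notMem {S : Set V} (hS : IsMaxIndepSet G S) {v : V}
    (hv : v ∉ S) : ∃ w ∈ S, G.Adj v w := by
  by_contra! hno
  have hind : IsIndepSet G (insert v S) := by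
    rintro a b (rfl | ha) (rfl | hb) hab
    · exact G.loopless.irrefl _ hab
    · exact hno b hb hab
    · exact hno a ha hab.symm
    · exact hS.1 ha hb hab
  exact hv ((hS.2 _ hind (Set.subset_insert v S)).symm ▸ Set.mem_insert v S)

theorem IsMaxIndepSet.subset_of_inter_eq_s4 {X S₁ S₂ : Set V} (hX : IsIndepSet G Xᶜ)
    (h₁ : IsMaxIndepSet G S₁) (h₂ : IsMaxIndepSet G S₂) (h : S₁ ∩ X = S₂ ∩ X) : S₁ ⊆ S₂ := by
  intro v hv₁
  by_cases hvX : v ∈ X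
  · exact (h ▸ ⟨hv₁, hvX⟩ : v ∈ S₂ ∩ X).1
  by_contra hv₂
  obtain ⟨w, hw₂, hvw⟩ := h₂.exists_adj_of_notMem hv₂
  by_cases hwX : w ∈ X
  · exact h₁.1 hv₁ (h ▸ ⟨hw₂, hwX⟩ : w ∈ S₁ ∩ X).1 hvw
  · exact hX hvX hwX hvw

theorem IsMaxIndepSet.eq_of_inter_eq {X S₁ S₂ : Set V} (hX : IsIndepSet G Xᶜ)
    (h₁ : IsMaxIndepSet G S₁) (h₂ : IsMaxIndepSet G S₂) (h : S₁ ∩ X = S₂ ∩ X) : S₁ = S₂ :=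
  (h₁.subset_of_inter_eq_s4 hX h₂ h).antisymm (h₂.subset_of_inter_eq_s4 hX h₁ h.symm)

def matchedVerts (M : Set (Sym2 V)) : Set V := {v | ∃ e ∈ M, v ∈ e}

theorem IsMatching.insert {M : Set (Sym2 V)} (hM : IsMatching G M) {v w : V} (hvw : G.Adj v w)
    (hv : v ∉ matchedVerts M) (hw : w ∉ matchedVerts M) : IsMatching G (insert s(v, w) M) := by
  refine ⟨Set.insert_subset hvw hM.1, ?_⟩
  have fresh : ∀ e ∈ M, ∀ x ∈ s(v, w), x ∉ e := by
    rintro e he x hx hxe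
    rcases Sym2.mem_iff.mp hx with rfl | rfl
    exacts [hv ⟨e, he, hxe⟩, hw ⟨e, he, hxe⟩]
  rintro e (rfl | he) f (rfl | hf) hef x hxe hxf
  · exact hef rfl
  · exact fresh f hf x hxe hxf
  · exact fresh e he x hxf hxe
  · exact hM.2 e he f hf hef x hxe hxf

noncomputable def endpointCode (S : Set V) (a b : V) : Fin 3 :=
  open Classical in if a ∈ S then 1 else if b ∈ S then 2 else 0

theorem mem_of_endpointCode_eq {S₁ S₂ : Set V} {a b v : V} (hab : ¬ (a ∈ S₁ ∧ b ∈ S₁))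
    (hcode : endpointCode S₁ a b = endpointCode S₂ a b) (hv : v = a ∨ v = b) (hv₁ : v ∈ S₁) :
    v ∈ S₂ := by
  unfold endpointCode at hcode
  rcases hv with rfl | rfl <;> split_ifs at hcode <;> simp_all

variable [Finite V]

theorem bddAbove_matchingSizes (G : SimpleGraph V) :
    BddAbove {n | ∃ M : Set (Sym2 V), IsMatching G M ∧ M.ncard = n} :=
  ⟨Nat.card (Sym2 V), by rintro _ ⟨M, -, rfl⟩; exact Set.ncard_le_card M⟩

theorem IsMatching.ncard_le_matchingNumber {M : Set (Sym2 V)} (hM : IsMatching G M) :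
    M.ncard ≤ matchingNumber G :=
  le_csSup (bddAbove_matchingSizes G) ⟨M, hM, rfl⟩

theorem exists_isMatching_ncard_eq_matchingNumber (G : SimpleGraph V) :
    ∃ M : Set (Sym2 V), IsMatching G M ∧ M.ncard = matchingNumber G :=
  Nat.sSup_mem (s := {n | ∃ M : Set (Sym2 V), IsMatching G M ∧ M.ncard = n})
    ⟨0, ∅, ⟨Set.empty_subset _, by simp⟩, Set.ncard_empty _⟩ (bddAbove_matchingSizes G)

theorem IsMatching.isIndepSet_compl_matchedVerts {M : Set (Sym2 V)} (hM : IsMatching G M)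
    (hmax : M.ncard = matchingNumber G) : IsIndepSet G (matchedVerts M)ᶜ := by
  intro v w hv hw hvw
  have hnew : s(v, w) ∉ M := fun h => hv ⟨s(v, w), h, Sym2.mem_mk_left v w⟩
  have := (hM.insert hvw hv hw).ncard_le_matchingNumber
  rw [Set.ncard_insert_of_notMem hnew] at this
  omega

theorem ncard_setOf_isMaxIndepSet_le_three_pow {M : Set (Sym2 V)} (hM : IsMatching G M)
    (hfree : IsIndepSet G (matchedVerts M)ᶜ) :
    {S : Set V | IsMaxIndepSet G S}.ncard ≤ 3 ^ M.ncard := by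
  let code (S : Set V) (e : M) : Fin 3 := endpointCode S (e : Sym2 V).out.1 (e : Sym2 V).out.2
  have trace_subset {S₁ S₂ : Set V} (h₁ : IsIndepSet G S₁) (hcode : code S₁ = code S₂) :
      S₁ ∩ matchedVerts M ⊆ S₂ ∩ matchedVerts M := by
    rintro v ⟨hv₁, e, he, hve⟩
    have hadj : G.Adj e.out.1 e.out.2 := by have := hM.1 he; rwa [← e.out_eq] at this
    have hend : v = e.out.1 ∨ v = e.out.2 := by rwa [← e.out_eq, Sym2.mem_iff] at hve
    exact ⟨mem_of_endpointCode_eq (fun h => h₁ h.1 h.2 hadj) (congrFun hcode ⟨e, he⟩) hend hv₁,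
      e, he, hve⟩
  have hinj : Set.InjOn code {S | IsMaxIndepSet G S} := fun S₁ h₁ S₂ h₂ hcode =>
    h₁.eq_of_inter_eq hfree h₂
      ((trace_subset h₁.1 hcode).antisymm (trace_subset h₂.1 hcode.symm))
  calc {S : Set V | IsMaxIndepSet G S}.ncard
      ≤ (Set.univ : Set (M → Fin 3)).ncard :=
        Set.ncard_le_ncard_of_injOn code (fun _ _ => Set.mem_univ _) hinj
    _ = 3 ^ M.ncard := by rw [Set.ncard_univ, Nat.card_fun, Nat.card_coe_set_eq, Nat.card_fin]

end

/-- For every finite simple graph `G`, `m(G) ≤ 3 ^ ν(G)`. -/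
theorem numMaxIndep_le_three_pow_matchingNumber [Fintype V] (G : SimpleGraph V) :
    numMaxIndep G ≤ 3 ^ matchingNumber G := by
  obtain ⟨M, hM, hmax⟩ := exists_isMatching_ncard_eq_matchingNumber G
  rw [numMaxIndep, ← hmax]
  exact ncard_setOf_isMaxIndepSet_le_three_pow hM (hM.isIndepSet_compl_matchedVerts hmax)
end

section
/- Let G be a finite simple graph with m(G) = 2^β(G), let S be a vertex cover of G with |S| = β(G), and let U ⊆ S. Then the graph G_U obtained by deleting the closed neighborhood of U satisfies m(G_U) = 2^{β(G_U)} and β(G_U) = β(G) − |U|. -/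
variable {V : Type*}

/-! A maximal independent set is determined by its trace on a vertex cover `S`, so `m(G) ≤ 2 ^ |S|`,
with equality exactly when every subset of `S` is such a trace. Taking the traces `S` and `S \ {s}`
shows that equality forces `S` to be independent with a private neighbour for each of its vertices;
conversely such a cover realises every trace, and its private edges form a matching, which makes it
a minimum cover. Both properties pass to the localization at `U ⊆ S`, with `S \ U` in place of `S`:
the neighbours of `U` lie outside `S`, and the private neighbour of a vertex of `S \ U` sees no
vertex of `U`. -/

variable {G : SimpleGraph V} {S A M C U : Set V}

lemma isIndepSet_insert_iff {v : V} :
    IsIndepSet G (insert v M) ↔ IsIndepSet G M ∧ ∀ u ∈ M, ¬ G.Adj u v := by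
  refine ⟨fun h => ⟨fun x y hx hy => h (.inr hx) (.inr hy), fun u hu => h (.inr hu) (.inl rfl)⟩,
    ?_⟩
  rintro ⟨hM, hv⟩ x y (rfl | hx) (rfl | hy) hxy
  · exact G.irrefl hxy
  · exact hv y hy hxy.symm
  · exact hv x hx hxy
  · exact hM hx hy hxy

lemma isMaxIndepSet_iff :
    IsMaxIndepSet G M ↔ IsIndepSet G M ∧ ∀ v ∉ M, ∃ u ∈ M, G.Adj u v := by
  refine ⟨fun hM => ⟨hM.1, fun v hv => ?_⟩, fun ⟨hM, hdom⟩ => ⟨hM, fun T hT hMT => ?_⟩⟩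
  · by_contra! hfree
    exact hv ((hM.2 _ (isIndepSet_insert_iff.2 ⟨hM.1, hfree⟩) (Set.subset_insert v M)) ▸
      Set.mem_insert v M)
  · refine hMT.antisymm fun v hv => ?_
    by_contra hvM
    obtain ⟨u, hu, huv⟩ := hdom v hvM
    exact hT (hMT hu) hv huv

/-- The largest candidate for an independent set with trace `A` on the vertex cover `S`. -/
def coverExtension (G : SimpleGraph V) (S A : Set V) : Set V :=
  A ∪ {v | v ∉ S ∧ ∀ a ∈ A, ¬ G.Adj a v}

lemma coverExtension_inter_self (hA : A ⊆ S) : coverExtension G S A ∩ S = A := by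
  refine Set.Subset.antisymm ?_ fun v hv => ⟨.inl hv, hA hv⟩
  rintro v ⟨hv | ⟨hvS, -⟩, hvS'⟩
  · exact hv
  · exact absurd hvS' hvS

lemma IsVertexCover.eq_coverExtension_inter (hS : IsVertexCover G S) (hM : IsMaxIndepSet G M) :
    M = coverExtension G S (M ∩ S) := by
  refine Set.Subset.antisymm (fun v hv => ?_) ?_
  · by_cases hvS : v ∈ S
    · exact .inl ⟨hv, hvS⟩
    · exact .inr ⟨hvS, fun a ha => hM.1 ha.1 hv⟩
  · rintro v (hv | ⟨hvS, hfree⟩)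
    · exact hv.1
    · by_contra hvM
      obtain ⟨u, hu, huv⟩ := (isMaxIndepSet_iff.1 hM).2 v hvM
      exact hfree u ⟨hu, (hS huv).resolve_right hvS⟩ huv

lemma IsVertexCover.injOn_inter (hS : IsVertexCover G S) :
    Set.InjOn (· ∩ S) {M : Set V | IsMaxIndepSet G M} := fun M hM N hN hMN => by
  rw [hS.eq_coverExtension_inter hM, hS.eq_coverExtension_inter hN]
  exact congrArg _ hMN

theorem IsVertexCover.numMaxIndep_eq_two_pow_iff [Finite V] (hS : IsVertexCover G S) :
    numMaxIndep G = 2 ^ S.ncard ↔ ∀ A ⊆ S, ∃ M, IsMaxIndepSet G M ∧ M ∩ S = A := by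
  have htraces : (· ∩ S) '' {M : Set V | IsMaxIndepSet G M} ⊆ 𝒫 S := by
    rintro _ ⟨M, -, rfl⟩
    exact Set.inter_subset_right
  rw [numMaxIndep, ← hS.injOn_inter.ncard_image, ← Set.ncard_powerset S]
  refine ⟨fun h A hA => ?_, fun h => congrArg _ (htraces.antisymm fun A hA => h A hA)⟩
  exact (Set.eq_of_subset_of_ncard_le htraces h.ge).ge hA

structure IsPrivateCover (G : SimpleGraph V) (S : Set V) : Prop where
  isVertexCover : IsVertexCover G S
  isIndepSet : IsIndepSet G S
  exists_private_neighbor : ∀ s ∈ S, ∃ w, G.Adj s w ∧ ∀ t ∈ S, G.Adj t w → t = s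

lemma IsVertexCover.isPrivateCover_of_forall_exists_inter_eq (hS : IsVertexCover G S)
    (h : ∀ A ⊆ S, ∃ M, IsMaxIndepSet G M ∧ M ∩ S = A) : IsPrivateCover G S := by
  refine ⟨hS, ?_, fun s hs => ?_⟩
  · obtain ⟨M, hM, hMS⟩ := h S subset_rfl
    have hSM : S ⊆ M := Set.inter_eq_right.1 hMS
    exact fun u v hu hv => hM.1 (hSM hu) (hSM hv)
  · obtain ⟨M, hM, hMS⟩ := h (S \ {s}) Set.sdiff_subset
    have hsM : s ∉ M := fun hsM => (hMS ▸ ⟨hsM, hs⟩ : s ∈ S \ {s}).2 rfl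
    obtain ⟨w, hwM, hws⟩ := (isMaxIndepSet_iff.1 hM).2 s hsM
    refine ⟨w, hws.symm, fun t ht htw => ?_⟩
    by_contra hts
    have htM : t ∈ M := (hMS.symm ▸ ⟨ht, hts⟩ : t ∈ M ∩ S).1
    exact hM.1 htM hwM htw

lemma IsPrivateCover.isMaxIndepSet_coverExtension (hP : IsPrivateCover G S) (hA : A ⊆ S) :
    IsMaxIndepSet G (coverExtension G S A) := by
  refine isMaxIndepSet_iff.2 ⟨?_, fun v hv => ?_⟩
  · rintro u v (hu | ⟨huS, hu⟩) (hv | ⟨hvS, hv⟩) huv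
    · exact hP.isIndepSet (hA hu) (hA hv) huv
    · exact hv u hu huv
    · exact hu v hv huv.symm
    · exact (hP.isVertexCover huv).elim huS hvS
  by_cases hvS : v ∈ S
  · obtain ⟨w, hvw, hw⟩ := hP.exists_private_neighbor v hvS
    have hvA : v ∉ A := fun h => hv (.inl h)
    refine ⟨w, .inr ⟨fun hwS => hP.isIndepSet hvS hwS hvw, fun a ha haw => ?_⟩, hvw.symm⟩
    exact hvA (hw a (hA ha) haw ▸ ha)
  · have hdom : ¬ ∀ a ∈ A, ¬ G.Adj a v := fun h => hv (.inr ⟨hvS, h⟩)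
    simp only [not_forall, not_not] at hdom
    obtain ⟨a, ha, hav⟩ := hdom
    exact ⟨a, .inl ha, hav⟩

theorem IsVertexCover.numMaxIndep_eq_two_pow_iff_isPrivateCover [Finite V]
    (hS : IsVertexCover G S) : numMaxIndep G = 2 ^ S.ncard ↔ IsPrivateCover G S := by
  rw [hS.numMaxIndep_eq_two_pow_iff]
  exact ⟨hS.isPrivateCover_of_forall_exists_inter_eq, fun hP A hA =>
    ⟨_, hP.isMaxIndepSet_coverExtension hA, coverExtension_inter_self hA⟩⟩

lemma IsPrivateCover.ncard_le_of_isVertexCover [Finite V] (hP : IsPrivateCover G S)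
    (hC : IsVertexCover G C) : S.ncard ≤ C.ncard := by
  classical
  choose! f hf hf_priv using hP.exists_private_neighbor
  have hfS : ∀ s ∈ S, f s ∉ S := fun s hs hfs => hP.isIndepSet hs hfs (hf s hs)
  -- `C` meets each of the pairwise disjoint private edges `s — f s`
  refine Set.ncard_le_ncard_of_injOn (fun s => if s ∈ C then s else f s) (fun s hs => ?_)
    (fun s hs t ht hst => ?_)
  · split_ifs with hsC
    · exact hsC
    · exact (hC (hf s hs)).resolve_left hsC
  · dsimp only at hst
    split_ifs at hst
    · exact hst
    · exact absurd (hst ▸ hs) (hfS t ht)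
    · exact absurd (hst ▸ ht) (hfS s hs)
    · exact (hf_priv s hs t ht (hst ▸ hf t ht)).symm

lemma IsPrivateCover.coverNumber_eq [Finite V] (hP : IsPrivateCover G S) :
    coverNumber G = S.ncard :=
  le_antisymm (Nat.sInf_le ⟨S, hP.isVertexCover, rfl⟩)
    (le_csInf ⟨_, S, hP.isVertexCover, rfl⟩ fun _ ⟨_, hC, hn⟩ =>
      hn ▸ hP.ncard_le_of_isVertexCover hC)

/-- `N_G[U]`; the localization `G_U` of the paper is `G.induce (closedNbhd G U)ᶜ`. -/
abbrev closedNbhd (G : SimpleGraph V) (U : Set V) : Set V :=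
  U ∪ {v | ∃ u ∈ U, G.Adj u v}

lemma IsPrivateCover.induce_compl_closedNbhd (hP : IsPrivateCover G S) (hU : U ⊆ S) :
    IsPrivateCover (G.induce (closedNbhd G U)ᶜ) (Subtype.val ⁻¹' S) where
  isVertexCover _ _ huv := hP.isVertexCover huv
  isIndepSet _ _ hu hv := hP.isIndepSet hu hv
  exists_private_neighbor s hs := by
    obtain ⟨w, hsw, hw⟩ := hP.exists_private_neighbor s hs
    have hwU : w ∈ (closedNbhd G U)ᶜ := by
      rintro (hwU | ⟨u, hu, huw⟩)
      · exact hP.isIndepSet hs (hU hwU) hsw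
      · exact s.2 (.inl (hw u (hU hu) huw ▸ hu))
    exact ⟨⟨w, hwU⟩, hsw, fun t ht htw => Subtype.ext (hw t ht htw)⟩

lemma IsIndepSet.ncard_preimage_val_compl_closedNbhd [Finite V] (hS : IsIndepSet G S)
    (hU : U ⊆ S) :
    (Subtype.val ⁻¹' S : Set ↥(closedNbhd G U)ᶜ).ncard = S.ncard - U.ncard := by
  rw [← Set.ncard_image_of_injective _ Subtype.val_injective, Subtype.image_preimage_coe,
    ← Set.ncard_sdiff hU]
  refine congrArg _ (Set.ext fun v => ⟨fun ⟨hv, hvS⟩ => ⟨hvS, fun hvU => hv (.inl hvU)⟩,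
    fun ⟨hvS, hvU⟩ => ⟨?_, hvS⟩⟩)
  rintro (hvU' | ⟨u, hu, huv⟩)
  · exact hvU hvU'
  · exact hS (hU hu) hvS huv

/-- If `m(G) = 2 ^ β(G)`, `S` is a minimum vertex cover and `U ⊆ S`,
then the localization `G_U` satisfies `m(G_U) = 2 ^ β(G_U)` and
`β(G_U) = β(G) − |U|`. -/
theorem localization_extremal [Fintype V] (G : SimpleGraph V)
    (hm : numMaxIndep G = 2 ^ coverNumber G)
    (S : Set V) (hS : IsVertexCover G S) (hcard : S.ncard = coverNumber G)
    (U : Set V) (hU : U ⊆ S) :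
    numMaxIndep (G.induce ((U ∪ {v : V | ∃ u ∈ U, G.Adj u v})ᶜ)) =
        2 ^ coverNumber (G.induce ((U ∪ {v : V | ∃ u ∈ U, G.Adj u v})ᶜ)) ∧
      coverNumber (G.induce ((U ∪ {v : V | ∃ u ∈ U, G.Adj u v})ᶜ)) =
        coverNumber G - U.ncard := by
  have hP : IsPrivateCover G S := hS.numMaxIndep_eq_two_pow_iff_isPrivateCover.1 (hcard ▸ hm)
  have hPU := hP.induce_compl_closedNbhd hU
  rw [hPU.coverNumber_eq]
  exact ⟨hPU.isVertexCover.numMaxIndep_eq_two_pow_iff_isPrivateCover.2 hPU,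
    hcard ▸ hP.isIndepSet.ncard_preimage_val_compl_closedNbhd hU⟩
end
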